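/- arXiv:1801.01475 — 2 statements merged into one kernel-verified Lean document; each statement's English description precedes it below -/
import Mathlib

section
/- Suppose kernels K_i : [0,∞) → Matrix (Fin d) (Fin d) ℝ have each component bounded in L¹ norm by K⋆ < ∞, and the correlation functions satisfy |C̃_{ij}^{mn}(t,t')| < F(t-t') for a positive even integrable function F with ∫₀^∞ F = f⋆ < ∞. Then the limit as t → ∞ of |∫₀ᵗ ⟨δv^m(t) δv^n(s)⟩ ds|, where the integrand is the triple-integral expression ∑_{ij} ∫₀ᵗ ds₃ ∫₀ᵗ ds₁ ∫₀^{s₁} ds₂ K_i^{ml}(t-s₃) C̃_{ij}^{lk}(s₃,s₂) K_j^{nk}(s₁-s₂), is bounded by 2[(N+1) K⋆ d]² f⋆ < ∞. -/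
/-!
Each of the `(N+1)²d²` terms is bounded uniformly in `t`. Dominate the integrand by
`|K_i(t-s₃)| F(s₃-s₂) |K_j(s₁-s₂)|` and extend both kernels by zero to negative times; the triple
integral is then bounded by a Lebesgue integral over all of `ℝ³`, which Tonelli and translation
invariance factor as `‖K_i‖₁ ‖F‖_{L¹(ℝ)} ‖K_j‖₁`, and evenness gives `‖F‖_{L¹(ℝ)} = 2 f⋆`.
The inequality stays strict after the limsup because the largest of the finitely many
`‖K_i^{mn}‖₁` is still `< K⋆`.
-/

open MeasureTheory Filter Set
open scoped ENNReal Interval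

theorem lintegral_lintegral_comp_sub_mul {G : Type*} [MeasurableSpace G] [AddGroup G]
    [MeasurableAdd₂ G] [MeasurableNeg G] {μ : Measure G} [SFinite μ] [μ.IsAddRightInvariant]
    {Φ Ψ : G → ℝ≥0∞} (hΦ : AEMeasurable Φ μ) (hΨ : AEMeasurable Ψ μ) :
    ∫⁻ x, ∫⁻ y, Φ (x - y) * Ψ y ∂μ ∂μ = (∫⁻ x, Φ x ∂μ) * ∫⁻ y, Ψ y ∂μ := by
  have hprod : AEMeasurable (Function.uncurry fun x y => Φ (x - y) * Ψ y) (μ.prod μ) :=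
    (hΦ.comp_quasiMeasurePreserving (quasiMeasurePreserving_sub_of_right_invariant μ μ)).mul
      hΨ.comp_snd
  rw [lintegral_lintegral_swap hprod]
  calc ∫⁻ y, ∫⁻ x, Φ (x - y) * Ψ y ∂μ ∂μ = ∫⁻ y, (∫⁻ x, Φ x ∂μ) * Ψ y ∂μ := by
        refine lintegral_congr fun y => ?_
        have hΦy : AEMeasurable (fun x => Φ (x - y)) μ :=
          hΦ.comp_quasiMeasurePreserving (measurePreserving_sub_right μ y).quasiMeasurePreserving
        rw [lintegral_mul_const'' _ hΦy, lintegral_sub_right_eq_self]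
    _ = (∫⁻ x, Φ x ∂μ) * ∫⁻ y, Ψ y ∂μ := lintegral_const_mul'' _ hΨ

theorem enorm_intervalIntegral_le_lintegral {E : Type*} [NormedAddCommGroup E] [NormedSpace ℝ E]
    {μ : Measure ℝ} {f : ℝ → E} {g : ℝ → ℝ≥0∞} {a b : ℝ} (h : ∀ x ∈ Ι a b, ‖f x‖ₑ ≤ g x) :
    ‖∫ x in a..b, f x ∂μ‖ₑ ≤ ∫⁻ x, g x ∂μ := by
  rw [← ofReal_norm, intervalIntegral.norm_integral_eq_norm_integral_uIoc, ofReal_norm]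
  exact (enorm_integral_le_lintegral_enorm _).trans
    ((setLIntegral_mono' measurableSet_uIoc h).trans (setLIntegral_le_lintegral _ _))

theorem MeasureTheory.IntegrableOn.integrable_of_even {E : Type*} [NormedAddCommGroup E]
    {F : ℝ → E} (hF : IntegrableOn F (Ioi 0)) (heven : ∀ x, F (-x) = F x) : Integrable F := by
  have hIic : IntegrableOn F (Iic 0) := by
    have hneg : MeasurableEmbedding fun x : ℝ => -x := (Homeomorph.neg ℝ).measurableEmbedding
    rw [← Measure.map_neg_eq_self (volume : Measure ℝ), hneg.integrableOn_map_iff]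
    simp_rw [Function.comp_def, heven, neg_preimage, neg_Iic, neg_zero]
    exact (integrableOn_Ici_iff_integrableOn_Ioi enorm_ne_top).2 hF
  rw [← integrableOn_univ, ← Iic_union_Ioi (a := (0 : ℝ))]
  exact hIic.union hF

theorem integral_eq_two_mul_integral_Ioi_of_even {F : ℝ → ℝ} (heven : ∀ x, F (-x) = F x) :
    ∫ x, F x = 2 * ∫ x in Ioi 0, F x := by
  rw [← integral_comp_abs]
  congr 1 with x
  rcases abs_choice x with h | h <;> simp [h, heven]

theorem lintegral_indicator_Ici_ofReal {a : ℝ → ℝ} (ha : IntegrableOn a (Ioi 0))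
    (ha0 : ∀ u, 0 ≤ a u) :
    ∫⁻ u, (Ici 0).indicator (fun u => ENNReal.ofReal (a u)) u =
      ENNReal.ofReal (∫ u in Ioi 0, a u) := by
  rw [lintegral_indicator measurableSet_Ici, ← Measure.restrict_congr_set Ioi_ae_eq_Ici,
    ofReal_integral_eq_lintegral_ofReal ha (ae_of_all _ ha0)]

theorem abs_sum_le_card_mul {ι : Type*} [Fintype ι] {f : ι → ℝ} {c : ℝ} (h : ∀ i, |f i| ≤ c) :
    |∑ i, f i| ≤ Fintype.card ι * c := by
  refine (Finset.abs_sum_le_sum_abs _ _).trans ?_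
  have := Finset.sum_le_card_nsmul Finset.univ (fun i => |f i|) c fun i _ => h i
  rwa [Finset.card_univ, nsmul_eq_mul] at this

theorem enorm_intervalIntegral_causal_triple_le {a b F : ℝ → ℝ} {ψ : ℝ → ℝ → ℝ → ℝ} {t : ℝ}
    (ht : 0 ≤ t) (ha : IntegrableOn a (Ioi 0)) (hb : IntegrableOn b (Ioi 0)) (hF : Integrable F)
    (ha0 : ∀ u, 0 ≤ a u) (hb0 : ∀ u, 0 ≤ b u) (hF0 : ∀ u, 0 ≤ F u)
    (hψ : ∀ s₃ s₁ s₂, |ψ s₃ s₁ s₂| ≤ a (t - s₃) * F (s₃ - s₂) * b (s₁ - s₂)) :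
    ‖∫ s₃ in (0:ℝ)..t, ∫ s₁ in (0:ℝ)..t, ∫ s₂ in (0:ℝ)..s₁, ψ s₃ s₁ s₂‖ₑ ≤
      ENNReal.ofReal (∫ u in Ioi 0, a u) *
        (ENNReal.ofReal (∫ u in Ioi 0, b u) * ENNReal.ofReal (∫ u, F u)) := by
  set A := (Ici 0).indicator fun u => ENNReal.ofReal (a u)
  set B := (Ici 0).indicator fun u => ENNReal.ofReal (b u)
  set Fe := fun u => ENNReal.ofReal (F u)
  have hA (u : ℝ) : A u ≠ ∞ :=
    ((indicator_le_self (Ici 0) (fun u => ENNReal.ofReal (a u)) u).trans_lt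
      ENNReal.ofReal_lt_top).ne
  have hB : AEMeasurable B := (aemeasurable_indicator_iff measurableSet_Ici).2
    ((integrableOn_Ici_iff_integrableOn_Ioi enorm_ne_top).2 hb).aemeasurable.ennreal_ofReal
  have hFe (s₃ : ℝ) : AEMeasurable (fun s₂ => Fe (s₃ - s₂)) :=
    hF.aemeasurable.ennreal_ofReal.comp_quasiMeasurePreserving
      (quasiMeasurePreserving_sub_left volume s₃)
  have hpoint : ∀ s₃ ∈ Ι 0 t, ∀ s₁ ∈ Ι 0 t, ∀ s₂ ∈ Ι 0 s₁,
      ‖ψ s₃ s₁ s₂‖ₑ ≤ A (t - s₃) * (B (s₁ - s₂) * Fe (s₃ - s₂)) := by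
    intro s₃ hs₃ s₁ hs₁ s₂ hs₂
    rw [uIoc_of_le ht] at hs₃ hs₁
    rw [uIoc_of_le hs₁.1.le] at hs₂
    have hAt : A (t - s₃) = ENNReal.ofReal (a (t - s₃)) :=
      indicator_of_mem (mem_Ici.2 (sub_nonneg.2 hs₃.2)) _
    have hBs : B (s₁ - s₂) = ENNReal.ofReal (b (s₁ - s₂)) :=
      indicator_of_mem (mem_Ici.2 (sub_nonneg.2 hs₂.2)) _
    rw [hAt, hBs, Real.enorm_eq_ofReal_abs,
      ← ENNReal.ofReal_mul (hb0 _), ← ENNReal.ofReal_mul (ha0 _)]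
    exact ENNReal.ofReal_le_ofReal ((hψ _ _ _).trans_eq (by ring))
  have hconv (s₃ : ℝ) : ∫⁻ s₁, ∫⁻ s₂, B (s₁ - s₂) * Fe (s₃ - s₂) =
      ENNReal.ofReal (∫ u in Ioi 0, b u) * ENNReal.ofReal (∫ u, F u) := by
    rw [lintegral_lintegral_comp_sub_mul hB (hFe s₃), lintegral_indicator_Ici_ofReal hb hb0,
      lintegral_sub_left_eq_self Fe s₃, ofReal_integral_eq_lintegral_ofReal hF (ae_of_all _ hF0)]
  calc ‖∫ s₃ in (0:ℝ)..t, ∫ s₁ in (0:ℝ)..t, ∫ s₂ in (0:ℝ)..s₁, ψ s₃ s₁ s₂‖ₑ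
      ≤ ∫⁻ s₃, A (t - s₃) * ∫⁻ s₁, ∫⁻ s₂, B (s₁ - s₂) * Fe (s₃ - s₂) := by
        refine enorm_intervalIntegral_le_lintegral fun s₃ hs₃ => ?_
        rw [← lintegral_const_mul' _ _ (hA _)]
        refine enorm_intervalIntegral_le_lintegral fun s₁ hs₁ => ?_
        rw [← lintegral_const_mul' _ _ (hA _)]
        exact enorm_intervalIntegral_le_lintegral (hpoint s₃ hs₃ s₁ hs₁)
    _ = _ := by
        simp_rw [hconv]
        rw [lintegral_mul_const' _ _ (ENNReal.mul_ne_top ENNReal.ofReal_ne_top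
          ENNReal.ofReal_ne_top), lintegral_sub_left_eq_self A t,
          lintegral_indicator_Ici_ofReal ha ha0]

theorem abs_intervalIntegral_causal_triple_le {a b F : ℝ → ℝ} {ψ : ℝ → ℝ → ℝ → ℝ} {t : ℝ}
    (ht : 0 ≤ t) (ha : IntegrableOn a (Ioi 0)) (hb : IntegrableOn b (Ioi 0)) (hF : Integrable F)
    (ha0 : ∀ u, 0 ≤ a u) (hb0 : ∀ u, 0 ≤ b u) (hF0 : ∀ u, 0 ≤ F u)
    (hψ : ∀ s₃ s₁ s₂, |ψ s₃ s₁ s₂| ≤ a (t - s₃) * F (s₃ - s₂) * b (s₁ - s₂)) :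
    |∫ s₃ in (0:ℝ)..t, ∫ s₁ in (0:ℝ)..t, ∫ s₂ in (0:ℝ)..s₁, ψ s₃ s₁ s₂| ≤
      (∫ u in Ioi 0, a u) * (∫ u, F u) * ∫ u in Ioi 0, b u := by
  have hbound := enorm_intervalIntegral_causal_triple_le ht ha hb hF ha0 hb0 hF0 hψ
  have hFint0 : 0 ≤ ∫ u, F u := integral_nonneg hF0
  have hbint0 : 0 ≤ ∫ u in Ioi 0, b u := setIntegral_nonneg measurableSet_Ioi fun u _ => hb0 u
  have haint0 : 0 ≤ ∫ u in Ioi 0, a u := setIntegral_nonneg measurableSet_Ioi fun u _ => ha0 u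
  rw [← ENNReal.ofReal_mul hbint0, ← ENNReal.ofReal_mul haint0, Real.enorm_eq_ofReal_abs,
    ENNReal.ofReal_le_ofReal_iff (by positivity)] at hbound
  linarith

theorem abs_intervalIntegral_kernel_correlation_kernel_le {k₁ k₂ F : ℝ → ℝ}
    {c : ℝ → ℝ → ℝ} {t : ℝ} (ht : 0 ≤ t) (hk₁ : IntegrableOn (fun s => |k₁ s|) (Ioi 0))
    (hk₂ : IntegrableOn (fun s => |k₂ s|) (Ioi 0)) (hF : Integrable F) (hF0 : ∀ u, 0 ≤ F u)
    (hc : ∀ s s', |c s s'| ≤ F (s - s')) :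
    |∫ s₃ in (0:ℝ)..t, ∫ s₁ in (0:ℝ)..t, ∫ s₂ in (0:ℝ)..s₁,
        k₁ (t - s₃) * c s₃ s₂ * k₂ (s₁ - s₂)| ≤
      (∫ u in Ioi 0, |k₁ u|) * (∫ u, F u) * ∫ u in Ioi 0, |k₂ u| := by
  refine abs_intervalIntegral_causal_triple_le ht hk₁ hk₂ hF (fun _ => abs_nonneg _)
    (fun _ => abs_nonneg _) hF0 fun s₃ s₁ s₂ => ?_
  rw [abs_mul, abs_mul]
  gcongr
  exact hc s₃ s₂

/-- uniform bound on the velocity-correlation integral.  With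
componentwise `L¹` bounds `K⋆` on the `N+1` kernels and the dominating bound
`|C̃_{ij}^{mn}(t,t')| < F(t-t')` for `F` positive, even and integrable with
`∫₀^∞ F = f⋆`, the large-time limit of the absolute value of the triple-integral
expression for `∫₀ᵗ ⟨δv^m(t) δv^n(s)⟩ ds` is bounded by `2[(N+1) K⋆ d]² f⋆`. -/
theorem stmt2 {d N : ℕ}
    (K : Fin (N + 1) → ℝ → Matrix (Fin d) (Fin d) ℝ)
    (Ct : Fin (N + 1) → Fin (N + 1) → ℝ → ℝ → Matrix (Fin d) (Fin d) ℝ)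
    (Kstar fstar : ℝ)
    (F : ℝ → ℝ)
    (hKint : ∀ i m n, IntegrableOn (fun s => |K i s m n|) (Set.Ioi 0))
    (hK : ∀ i m n, (∫ s in Set.Ioi (0:ℝ), |K i s m n|) < Kstar)
    (hCF : ∀ i j m n s s', |Ct i j s s' m n| < F (s - s'))
    (hFpos : ∀ s, 0 < F s)
    (hFeven : ∀ s, F (-s) = F s)
    (hFint : IntegrableOn F (Set.Ioi 0))
    (hfstar : (∫ s in Set.Ioi (0:ℝ), F s) = fstar) :
    ∀ m n,
      Filter.limsup
        (fun t =>
          |∑ i, ∑ j, ∑ l, ∑ k,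
            ∫ s₃ in (0:ℝ)..t, ∫ s₁ in (0:ℝ)..t, ∫ s₂ in (0:ℝ)..s₁,
              K i (t - s₃) m l * Ct i j s₃ s₂ l k * K j (s₁ - s₂) n k|)
        Filter.atTop
        < 2 * (((N : ℝ) + 1) * Kstar * (d : ℝ)) ^ 2 * fstar := by
  intro m n
  have hF0 (s : ℝ) : 0 ≤ F s := (hFpos s).le
  have hFint' : Integrable F := hFint.integrable_of_even hFeven
  have hFtotal : ∫ s, F s = 2 * fstar := hfstar ▸ integral_eq_two_mul_integral_Ioi_of_even hFeven
  have hfstar_pos : 0 < fstar := by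
    have : 0 < ∫ s, F s := (integral_pos_iff_support_of_nonneg hF0 hFint').2 (by
      simp [Function.support, (hFpos _).ne'])
    linarith
  have : Nonempty (Fin d) := ⟨m⟩
  obtain ⟨p, hp⟩ := Finite.exists_max
    fun p : Fin (N + 1) × Fin d × Fin d => ∫ s in Ioi 0, |K p.1 s p.2.1 p.2.2|
  set κ := ∫ s in Ioi 0, |K p.1 s p.2.1 p.2.2|
  have hκ0 : 0 ≤ κ := setIntegral_nonneg measurableSet_Ioi fun _ _ => abs_nonneg _
  have hterm (t : ℝ) (ht : 0 ≤ t) (i j l k) :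
      |∫ s₃ in (0:ℝ)..t, ∫ s₁ in (0:ℝ)..t, ∫ s₂ in (0:ℝ)..s₁,
        K i (t - s₃) m l * Ct i j s₃ s₂ l k * K j (s₁ - s₂) n k| ≤ κ * (2 * fstar) * κ := by
    refine (abs_intervalIntegral_kernel_correlation_kernel_le ht (hKint i m l) (hKint j n k)
      hFint' hF0 fun s s' => (hCF i j l k s s').le).trans ?_
    rw [hFtotal]
    gcongr
    exacts [hp (i, m, l), hp (j, n, k)]
  have hd : (0 : ℝ) < d := by exact_mod_cast Fin.pos m
  refine (limsup_le_of_le (a := (N + 1) * ((N + 1) * (d * (d * (κ * (2 * fstar) * κ)))))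
    (isCoboundedUnder_le_of_le atTop fun _ => abs_nonneg _) ?_).trans_lt ?_
  · filter_upwards [eventually_ge_atTop 0] with t ht
    simpa using abs_sum_le_card_mul fun i => abs_sum_le_card_mul fun j =>
      abs_sum_le_card_mul fun l => abs_sum_le_card_mul fun k => hterm t ht i j l k
  · calc (N + 1) * ((N + 1) * (d * (d * (κ * (2 * fstar) * κ))))
        = 2 * ((N + 1) * κ * d) ^ 2 * fstar := by ring
      _ < 2 * (((N : ℝ) + 1) * Kstar * (d : ℝ)) ^ 2 * fstar := by
        gcongr
        exact hK _ _ _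
end

section
/- The function g(Ro) = D₀(1 + 2/(1+4/Ro²)) + C₀[(1+4β/Ro²)² + 4(β−1)²/Ro²]/(1+4/Ro²)², defined for Ro > 0, has derivative g'(Ro) = −[(β²−1)C₀ − 2D₀] · 8 Ro/(Ro²+4)², and hence is monotone on (0,∞): increasing if (β²−1)C₀ < 2D₀ and decreasing if (β²−1)C₀ > 2D₀. -/
/-!
For `Ro ≠ 0` the trace collapses to `3 D₀ + C₀ + 4 K / (Ro² + 4)` with `K = (β² − 1) C₀ − 2 D₀`,
so both the derivative and the direction of monotonicity are governed by the sign of `K` alone.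
-/

open Set Filter

section SqAdd

variable {a b c : ℝ}

theorem hasDerivAt_const_add_div_sq_add (hc : 0 < c) (x : ℝ) :
    HasDerivAt (fun x => a + b / (x ^ 2 + c)) (-(b * (2 * x / (x ^ 2 + c) ^ 2))) x := by
  have hden : HasDerivAt (fun x : ℝ => x ^ 2 + c) (2 * x) x := by
    simpa using (hasDerivAt_pow 2 x).add_const c
  exact (((hasDerivAt_const x b).div hden (by positivity)).const_add a).congr_deriv (by ring)

theorem strictMonoOn_const_add_div_sq_add (hc : 0 < c) (hb : b < 0) :
    StrictMonoOn (fun x => a + b / (x ^ 2 + c)) (Ici 0) := by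
  intro x hx y _ hxy
  have hsq : x ^ 2 + c < y ^ 2 + c := by gcongr
  have := div_lt_div_of_pos_left (neg_pos.2 hb) (by positivity) hsq
  simp only [neg_div, neg_lt_neg_iff] at this
  exact add_lt_add_right this a

theorem strictAntiOn_const_add_div_sq_add (hc : 0 < c) (hb : 0 < b) :
    StrictAntiOn (fun x => a + b / (x ^ 2 + c)) (Ici 0) := by
  intro x hx y _ hxy
  have hsq : x ^ 2 + c < y ^ 2 + c := by gcongr
  simpa using div_lt_div_of_pos_left hb (by positivity) hsq

end SqAdd

theorem eddy_trace_eq (D₀ C₀ β : ℝ) {Ro : ℝ} (hRo : Ro ≠ 0) :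
    D₀ * (1 + 2 / (1 + 4 / Ro ^ 2)) +
        C₀ * ((1 + 4 * β / Ro ^ 2) ^ 2 + 4 * (β - 1) ^ 2 / Ro ^ 2) / (1 + 4 / Ro ^ 2) ^ 2 =
      (3 * D₀ + C₀) + 4 * ((β ^ 2 - 1) * C₀ - 2 * D₀) / (Ro ^ 2 + 4) := by
  have h4 : Ro ^ 2 + 4 ≠ 0 := by positivity
  have hfac : 1 + 4 / Ro ^ 2 = (Ro ^ 2 + 4) / Ro ^ 2 := by field_simp
  rw [hfac]
  field_simp
  ring

theorem stmt13_general (D₀ C₀ β : ℝ)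
    (g : ℝ → ℝ)
    (hg : ∀ Ro : ℝ, 0 < Ro → g Ro =
      D₀ * (1 + 2 / (1 + 4 / Ro ^ 2)) +
        C₀ * ((1 + 4 * β / Ro ^ 2) ^ 2 + 4 * (β - 1) ^ 2 / Ro ^ 2) /
          (1 + 4 / Ro ^ 2) ^ 2) :
    (∀ Ro : ℝ, 0 < Ro →
        HasDerivAt g
          (-(((β ^ 2 - 1) * C₀ - 2 * D₀) * (8 * Ro / (Ro ^ 2 + 4) ^ 2))) Ro) ∧
      ((β ^ 2 - 1) * C₀ < 2 * D₀ → StrictMonoOn g (Set.Ioi 0)) ∧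
      ((β ^ 2 - 1) * C₀ > 2 * D₀ → StrictAntiOn g (Set.Ioi 0)) := by
  set K := (β ^ 2 - 1) * C₀ - 2 * D₀
  have hclosed : EqOn (fun x => (3 * D₀ + C₀) + 4 * K / (x ^ 2 + 4)) g (Ioi 0) :=
    fun x hx => ((hg x hx).trans (eddy_trace_eq D₀ C₀ β (ne_of_gt hx))).symm
  refine ⟨fun Ro hRo => ?_, fun hK => ?_, fun hK => ?_⟩
  · refine ((hasDerivAt_const_add_div_sq_add four_pos Ro).congr_of_eventuallyEq
      (eventually_of_mem (Ioi_mem_nhds hRo) fun x hx => (hclosed hx).symm)).congr_deriv ?_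
    ring
  · exact ((strictMonoOn_const_add_div_sq_add four_pos (by linarith)).mono
      Ioi_subset_Ici_self).congr hclosed
  · exact ((strictAntiOn_const_add_div_sq_add four_pos (by linarith)).mono
      Ioi_subset_Ici_self).congr hclosed

/-- the trace of the eddy-diffusivity tensor
`g(Ro) = D₀(1 + 2/(1+4/Ro²)) + C₀[(1+4β/Ro²)² + 4(β−1)²/Ro²]/(1+4/Ro²)²`
has derivative `g'(Ro) = −[(β²−1)C₀ − 2D₀] · 8Ro/(Ro²+4)²` on `(0,∞)`, hence it
is strictly increasing there if `(β²−1)C₀ < 2D₀` and strictly decreasing if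
`(β²−1)C₀ > 2D₀`. -/
theorem stmt13 (D₀ C₀ β : ℝ) (hD₀ : 0 < D₀) (hC₀ : 0 ≤ C₀) (hβ : 0 ≤ β)
    (g : ℝ → ℝ)
    (hg : ∀ Ro : ℝ, 0 < Ro → g Ro =
      D₀ * (1 + 2 / (1 + 4 / Ro ^ 2)) +
        C₀ * ((1 + 4 * β / Ro ^ 2) ^ 2 + 4 * (β - 1) ^ 2 / Ro ^ 2) /
          (1 + 4 / Ro ^ 2) ^ 2) :
    (∀ Ro : ℝ, 0 < Ro →
        HasDerivAt g
          (-(((β ^ 2 - 1) * C₀ - 2 * D₀) * (8 * Ro / (Ro ^ 2 + 4) ^ 2))) Ro) ∧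
      ((β ^ 2 - 1) * C₀ < 2 * D₀ → StrictMonoOn g (Set.Ioi 0)) ∧
      ((β ^ 2 - 1) * C₀ > 2 * D₀ → StrictAntiOn g (Set.Ioi 0)) :=
  stmt13_general D₀ C₀ β g hg
end
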